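/- In the dynamic network creation game in which players' communication cost uses the temporal shortest distance, for every real atomic cost α with 0 < α < 1 and every number of players n ≥ 2, the communication temporal graph of every Nash equilibrium has d_{𝒢[s]}(u, v) = 1 for every ordered pair of distinct vertices u, v; in particular its underlying graph is the complete graph K_n. -/

import Mathlib

open scoped ENNReal BigOperators

/-- A temporal path from `u` to `v`, given as a list of steps `(next vertex, time label)`.
The labelling `lab` gives, for each (ordered) pair of vertices, the set of time labels of the
edge joining them (empty if there is no edge); it is symmetric for temporal graphs arising
from strategy profiles.  The conditions say that consecutive steps use time labels belonging
to the corresponding edge, that time labels strictly increase along the path, that no vertex is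
repeated, and that the path ends at `v`. -/
def IsTemporalPath {V : Type*} (lab : V → V → Set ℕ) (u v : V) (p : List (V × ℕ)) : Prop :=
  List.Chain (fun a b => b.2 ∈ lab a.1 b.1) (u, 0) p ∧
  List.Chain' (· < ·) (p.map Prod.snd) ∧
  (u :: p.map Prod.fst).Nodup ∧
  (u :: p.map Prod.fst).getLast (List.cons_ne_nil _ _) = v

/-- The temporal shortest distance from `u` to `v`: the least number of edges of a temporal
path from `u` to `v` (`0` if `u = v`, `⊤` if there is no temporal path). -/
noncomputable def temporalDist {V : Type*} (lab : V → V → Set ℕ) (u v : V) : ℕ∞ :=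
  sInf {n : ℕ∞ | ∃ p : List (V × ℕ), IsTemporalPath lab u v p ∧ (p.length : ℕ∞) = n}

/-- The labelling of the communication temporal graph `𝒢[s]` of a strategy profile `s`:
`t` is a label of the edge `uv` iff `(u, t) ∈ s v` or `(v, t) ∈ s u`. -/
def profLab {V : Type*} (s : V → Finset (V × ℕ)) : V → V → Set ℕ :=
  fun u v => {t | (u, t) ∈ s v ∨ (v, t) ∈ s u}

/-- The (finite) set of time labels of the edge `uv` in the communication temporal graph. -/
def labelFinset {V : Type*} [DecidableEq V] (s : V → Finset (V × ℕ)) (u v : V) : Finset ℕ :=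
  (((s v).filter (fun p => p.1 = u)).image Prod.snd) ∪
    (((s u).filter (fun p => p.1 = v)).image Prod.snd)

/-- The total number of time labels `∑ e ∈ E, |λ(e)|` of the communication temporal graph
(each unordered pair is counted once, whence the division by `2`). -/
def numLabels {V : Type*} [Fintype V] [DecidableEq V] (s : V → Finset (V × ℕ)) : ℕ :=
  (∑ u : V, ∑ v : V, if u = v then 0 else (labelFinset s u v).card) / 2

/-- The number of edges `|E|` of the communication temporal graph. -/
def numEdges {V : Type*} [Fintype V] [DecidableEq V] (s : V → Finset (V × ℕ)) : ℕ :=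
  ((Finset.univ : Finset (V × V)).filter
    (fun q => q.1 ≠ q.2 ∧ (labelFinset s q.1 q.2).Nonempty)).card / 2

/-- The social cost `c[s] = α·∑_{e ∈ E} |λ(e)| + ∑_{(u,v) ∈ V×V} d_{𝒢[s]}(u,v)`
of a strategy profile `s` for atomic cost `α`. -/
noncomputable def socialCost {V : Type*} [Fintype V] [DecidableEq V]
    (α : ℝ) (s : V → Finset (V × ℕ)) : ℝ≥0∞ :=
  ENNReal.ofReal α * (numLabels s : ℝ≥0∞) +
    ∑ u : V, ∑ v : V, (temporalDist (profLab s) u v : ℝ≥0∞)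

/-- The individual cost `c[s](v) = α·|s(v)| + ∑_{w ∈ V} d_{𝒢[s]}(v,w)` of player `v`. -/
noncomputable def indivCost {V : Type*} [Fintype V]
    (α : ℝ) (s : V → Finset (V × ℕ)) (v : V) : ℝ≥0∞ :=
  ENNReal.ofReal α * ((s v).card : ℝ≥0∞) +
    ∑ w : V, (temporalDist (profLab s) v w : ℝ≥0∞)

/-- A strategy profile is a Nash equilibrium if no player can strictly decrease its individual
cost by changing only its own strategy. -/
def IsNash {V : Type*} [Fintype V] [DecidableEq V] (α : ℝ) (s : V → Finset (V × ℕ)) : Prop :=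
  ∀ (v : V) (t : Finset (V × ℕ)),
    ¬ indivCost α (Function.update s v t) v < indivCost α s v

/-- The optimal social cost `c*(α, n)`: the minimum social cost over all strategy profiles
with `n` players and atomic cost `α`. -/
noncomputable def optCost (α : ℝ) (n : ℕ) : ℝ≥0∞ :=
  ⨅ s : Fin n → Finset (Fin n × ℕ), socialCost α s

/-- The price of anarchy `PoA(α, n)`: the maximum social cost of a Nash equilibrium with `n`
players and atomic cost `α`, divided by the optimal social cost `c*(α, n)`. -/
noncomputable def PoA (α : ℝ) (n : ℕ) : ℝ≥0∞ :=
  (⨆ s : {s : Fin n → Finset (Fin n × ℕ) // IsNash α s}, socialCost α s.1) / optCost α n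

/-- The price of stability `PoS(α, n)`: the minimum social cost of a Nash equilibrium with `n`
players and atomic cost `α`, divided by the optimal social cost `c*(α, n)`. -/
noncomputable def PoS (α : ℝ) (n : ℕ) : ℝ≥0∞ :=
  (⨅ s : {s : Fin n → Finset (Fin n × ℕ) // IsNash α s}, socialCost α s.1) / optCost α n

/-!
If a player `u` is not adjacent to `v`, then `d(u, v) ≥ 2`. Buying the single edge `uv` costs
`α < 1`, brings `d(u, v)` down to `1` and, since labels are only added, lengthens no other
temporal distance from `u`; so it strictly lowers `u`'s cost, as long as that cost is finite.
Finiteness holds at an equilibrium because buying all edges `uw` at time `0` gives `u` a finite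
cost.
-/

section TemporalDist

variable {V : Type*}

theorem temporalDist_self (lab : V → V → Set ℕ) (u : V) : temporalDist lab u u = 0 :=
  le_antisymm (sInf_le ⟨[], ⟨.singleton _, List.isChain_nil, by simp, by simp⟩, by simp⟩)
    zero_le

theorem temporalDist_le_one_of_mem {lab : V → V → Set ℕ} {u v : V} (huv : u ≠ v) {t : ℕ}
    (ht : t ∈ lab u v) : temporalDist lab u v ≤ 1 :=
  sInf_le ⟨[(v, t)], ⟨List.isChain_pair.2 ht, List.isChain_singleton _, by simp [huv], by simp⟩,
    by simp⟩

theorem one_le_temporalDist (lab : V → V → Set ℕ) {u v : V} (huv : u ≠ v) :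
    1 ≤ temporalDist lab u v := by
  refine le_sInf ?_
  rintro _ ⟨_ | ⟨a, p⟩, ⟨-, -, -, hlast⟩, rfl⟩
  · exact absurd hlast huv
  · simp

theorem two_le_temporalDist (lab : V → V → Set ℕ) {u v : V} (huv : u ≠ v)
    (hlab : lab u v = ∅) : 2 ≤ temporalDist lab u v := by
  refine le_sInf ?_
  rintro _ ⟨_ | ⟨a, _ | ⟨b, p⟩⟩, ⟨hchain, -, -, hlast⟩, rfl⟩
  · exact absurd hlast huv
  · obtain rfl : a.1 = v := by simpa using hlast
    simpa [hlab] using List.isChain_pair.1 hchain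
  · exact_mod_cast (show 2 ≤ p.length + 1 + 1 by omega)

theorem temporalDist_eq_one_of_mem {lab : V → V → Set ℕ} {u v : V} (huv : u ≠ v) {t : ℕ}
    (ht : t ∈ lab u v) : temporalDist lab u v = 1 :=
  le_antisymm (temporalDist_le_one_of_mem huv ht) (one_le_temporalDist lab huv)

theorem temporalDist_anti {lab lab' : V → V → Set ℕ} (h : ∀ x y, lab x y ⊆ lab' x y) (u v : V) :
    temporalDist lab' u v ≤ temporalDist lab u v := by
  refine sInf_le_sInf ?_
  rintro _ ⟨p, ⟨hchain, hmono, hnodup, hlast⟩, rfl⟩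
  exact ⟨p, ⟨List.IsChain.imp (fun _ _ hb => h _ _ hb) hchain, hmono, hnodup, hlast⟩, rfl⟩

theorem profLab_mono {s s' : V → Finset (V × ℕ)} (h : ∀ z, s z ⊆ s' z) (x y : V) :
    profLab s x y ⊆ profLab s' x y :=
  fun _ ht => ht.imp (fun h' => h y h') (fun h' => h x h')

end TemporalDist

theorem Finset.sum_add_le_sum_of_le_of_add_le {ι M : Type*} [AddCommMonoid M] [PartialOrder M]
    [IsOrderedAddMonoid M] [DecidableEq ι] {s : Finset ι} {f g : ι → M} {c : M}
    (hfg : ∀ j ∈ s, f j ≤ g j) {i : ι} (hi : i ∈ s) (hc : f i + c ≤ g i) :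
    ∑ j ∈ s, f j + c ≤ ∑ j ∈ s, g j := by
  rw [← Finset.add_sum_erase s f hi, ← Finset.add_sum_erase s g hi, add_right_comm]
  exact add_le_add hc (Finset.sum_le_sum fun j hj => hfg j (Finset.mem_of_mem_erase hj))

section NetworkCreation

variable {V : Type*} [Fintype V] {α : ℝ} {s : V → Finset (V × ℕ)}

theorem indivCost_ne_top_of_forall {v : V} (h : ∀ w, temporalDist (profLab s) v w ≠ ⊤) :
    indivCost α s v ≠ ⊤ :=
  ENNReal.add_ne_top.2 ⟨ENNReal.mul_ne_top ENNReal.ofReal_ne_top (ENNReal.natCast_ne_top _),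
    ENNReal.sum_ne_top.2 fun w _ => by exact_mod_cast h w⟩

variable [DecidableEq V]

theorem indivCost_update_insert_add_one_le {u v : V} (huv : u ≠ v) (hlab : profLab s u v = ∅)
    (t : ℕ) :
    indivCost α (Function.update s u (insert (v, t) (s u))) u + 1 ≤
      indivCost α s u + ENNReal.ofReal α := by
  set s' := Function.update s u (insert (v, t) (s u))
  have hsub : ∀ z, s z ⊆ s' z := by
    intro z
    rcases eq_or_ne z u with rfl | hz
    · simp [s']
    · simp [s', Function.update_of_ne hz]
  have hcard : ENNReal.ofReal α * ((s' u).card : ℝ≥0∞) ≤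
      ENNReal.ofReal α * ((s u).card : ℝ≥0∞) + ENNReal.ofReal α := by
    rw [← mul_add_one]
    gcongr
    simp only [s', Function.update_self]
    exact_mod_cast Finset.card_insert_le _ _
  have hdist : ∑ w, (temporalDist (profLab s') u w : ℝ≥0∞) + 1 ≤
      ∑ w, (temporalDist (profLab s) u w : ℝ≥0∞) := by
    refine Finset.sum_add_le_sum_of_le_of_add_le
      (fun w _ => by exact_mod_cast temporalDist_anti (profLab_mono hsub) u w)
      (Finset.mem_univ v) ?_
    have hv : t ∈ profLab s' u v := Or.inr (by simp [s'])
    have : temporalDist (profLab s') u v + 1 ≤ temporalDist (profLab s) u v :=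
      calc temporalDist (profLab s') u v + 1 ≤ 1 + 1 :=
            add_le_add_left (temporalDist_le_one_of_mem huv hv) 1
        _ = 2 := one_add_one_eq_two
        _ ≤ _ := two_le_temporalDist _ huv hlab
    exact_mod_cast this
  unfold indivCost
  calc _ = ENNReal.ofReal α * ((s' u).card : ℝ≥0∞) +
        (∑ w, (temporalDist (profLab s') u w : ℝ≥0∞) + 1) := add_assoc _ _ _
    _ ≤ (ENNReal.ofReal α * ((s u).card : ℝ≥0∞) + ENNReal.ofReal α) +
        ∑ w, (temporalDist (profLab s) u w : ℝ≥0∞) := add_le_add hcard hdist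
    _ = _ := add_right_comm _ _ _

theorem IsNash.indivCost_ne_top (hs : IsNash α s) (u : V) : indivCost α s u ≠ ⊤ := by
  set star : Finset (V × ℕ) := Finset.univ.image fun w => (w, 0)
  have hstar : ∀ w, temporalDist (profLab (Function.update s u star)) u w ≠ ⊤ := by
    intro w
    rcases eq_or_ne u w with rfl | huw
    · simp [temporalDist_self]
    · have h0 : 0 ∈ profLab (Function.update s u star) u w := Or.inr (by simp [star])
      exact ne_top_of_le_ne_top (by simp) (temporalDist_le_one_of_mem huw h0)
  exact ne_top_of_le_ne_top (indivCost_ne_top_of_forall hstar) (not_lt.1 (hs u star))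

theorem IsNash.profLab_ne_empty (hs : IsNash α s) (hα : α < 1) {u v : V} (huv : u ≠ v) :
    profLab s u v ≠ ∅ := by
  intro hlab
  have hdev := not_lt.1 (hs u (insert (v, 0) (s u)))
  have : indivCost α s u + 1 ≤ indivCost α s u + ENNReal.ofReal α :=
    (add_le_add_left hdev 1).trans (indivCost_update_insert_add_one_le huv hlab 0)
  exact (ENNReal.ofReal_lt_one.2 hα).not_ge
    (ENNReal.le_of_add_le_add_left (hs.indivCost_ne_top u) this)

end NetworkCreation

theorem statement_9_general (α : ℝ) (hα1 : α < 1) (n : ℕ)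
    (s : Fin n → Finset (Fin n × ℕ)) (hs : IsNash α s) :
    ∀ u v : Fin n, u ≠ v →
      temporalDist (profLab s) u v = 1 ∧ profLab s u v ≠ ∅ := by
  intro u v huv
  have hlab := hs.profLab_ne_empty hα1 huv
  obtain ⟨t, ht⟩ := Set.nonempty_iff_ne_empty.2 hlab
  exact ⟨temporalDist_eq_one_of_mem huv ht, hlab⟩

/-- For every atomic cost `0 < α < 1` and every number of players `n ≥ 2`, the communication
temporal graph of every Nash equilibrium has temporal distance `1` between every ordered
pair of distinct vertices; in particular its underlying graph is the complete graph `K_n`. -/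
theorem statement_9 (α : ℝ) (hα0 : 0 < α) (hα1 : α < 1) (n : ℕ) (hn : 2 ≤ n)
    (s : Fin n → Finset (Fin n × ℕ)) (hs : IsNash α s) :
    ∀ u v : Fin n, u ≠ v →
      temporalDist (profLab s) u v = 1 ∧ profLab s u v ≠ ∅ :=
  statement_9_general α hα1 n s hs
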